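/- arXiv:1508.07918 — 2 statements merged into one kernel-verified Lean document; each statement's English description precedes it below -/
import Mathlib

section
/- For t ≥ 4, the sum c_t = Σ_{B nice subset of {1,...,t-1}} |B|² satisfies c_t = c_{t-1} + c_{t-2} + 2·b_{t-2} + F_{t-1}, where b_s = Σ_{B nice subset of {1,...,s-1}} |B|. -/
/-- The set of "nice" subsets of {1,...,t-1}: no two elements differ by exactly 1. -/
def niceSets (t : ℕ) : Finset (Finset ℕ) :=
  (Finset.Icc 1 (t - 1)).powerset.filter (fun B => ∀ x ∈ B, x + 1 ∉ B)

/-- b_t: the sum of the cardinalities of the nice subsets of {1,...,t-1}. -/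
def b (t : ℕ) : ℕ := ∑ B ∈ niceSets t, B.card

/-- c_t: the sum of |B|² over nice subsets B of {1,...,t-1}. -/
def c (t : ℕ) : ℕ := ∑ B ∈ niceSets t, B.card ^ 2

lemma mem_niceSets {t : ℕ} {B : Finset ℕ} :
    B ∈ niceSets t ↔ B ⊆ Finset.Icc 1 (t - 1) ∧ ∀ x ∈ B, x + 1 ∉ B := by
  simp [niceSets]

lemma bound_of_mem {s : ℕ} {B : Finset ℕ} (hB : B ∈ niceSets s) :
    ∀ x ∈ B, 1 ≤ x ∧ x ≤ s - 1 := by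
  intro x hx
  have := (mem_niceSets.mp hB).1 hx
  simpa [Finset.mem_Icc] using this

lemma notmem_succ {s : ℕ} {B : Finset ℕ} (hB : B ∈ niceSets s) : s + 1 ∉ B := by
  intro h
  have := bound_of_mem hB _ h
  omega

lemma decomp (s : ℕ) :
    niceSets (s + 2) = niceSets (s + 1) ∪ (niceSets s).image (insert (s + 1)) := by
  ext B
  simp only [Finset.mem_union, Finset.mem_image, mem_niceSets]
  constructor
  · rintro ⟨hsub, hnice⟩
    by_cases h : s + 1 ∈ B
    · right
      refine ⟨B.erase (s + 1), ⟨?_, ?_⟩, Finset.insert_erase h⟩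
      · intro x hx
        obtain ⟨hne, hxB⟩ := Finset.mem_erase.mp hx
        have hx' : 1 ≤ x ∧ x ≤ s + 2 - 1 := by
          simpa [Finset.mem_Icc] using hsub hxB
        have hxs : x ≠ s := by
          rintro rfl
          exact hnice x hxB h
        simp only [Finset.mem_Icc]
        omega
      · intro x hx hx1
        exact hnice x (Finset.mem_of_mem_erase hx) (Finset.mem_of_mem_erase hx1)
    · left
      refine ⟨?_, hnice⟩
      intro x hxB
      have hx' : 1 ≤ x ∧ x ≤ s + 2 - 1 := by
        simpa [Finset.mem_Icc] using hsub hxB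
      have : x ≠ s + 1 := by rintro rfl; exact h hxB
      simp only [Finset.mem_Icc]
      omega
  · rintro (⟨hsub, hnice⟩ | ⟨B', hB', rfl⟩)
    · refine ⟨hsub.trans ?_, hnice⟩
      apply Finset.Icc_subset_Icc le_rfl
      omega
    · obtain ⟨hsub, hnice⟩ := hB'
      constructor
      · intro x hx
        rcases Finset.mem_insert.mp hx with rfl | hx
        · simp only [Finset.mem_Icc]; omega
        · have := hsub hx
          simp only [Finset.mem_Icc] at this ⊢
          omega
      · intro x hx hx1
        rcases Finset.mem_insert.mp hx with rfl | hx
        · rcases Finset.mem_insert.mp hx1 with h | h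
          · omega
          · have := hsub h
            simp only [Finset.mem_Icc] at this
            omega
        · have hxb : 1 ≤ x ∧ x ≤ s - 1 := by
            simpa [Finset.mem_Icc] using hsub hx
          rcases Finset.mem_insert.mp hx1 with h | h
          · omega
          · exact hnice x hx h

lemma disj (s : ℕ) :
    Disjoint (niceSets (s + 1)) ((niceSets s).image (insert (s + 1))) := by
  rw [Finset.disjoint_left]
  rintro B hB hB'
  obtain ⟨B', hB'', rfl⟩ := Finset.mem_image.mp hB'
  have : s + 1 ∈ insert (s + 1) B' := Finset.mem_insert_self _ _
  have hb := bound_of_mem hB _ this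
  omega

lemma injOn (s : ℕ) : Set.InjOn (insert (s + 1)) (niceSets s : Set (Finset ℕ)) := by
  intro B hB B' hB' h
  have h1 : s + 1 ∉ B := notmem_succ hB
  have h2 : s + 1 ∉ B' := notmem_succ hB'
  have := congrArg (fun S => Finset.erase S (s + 1)) h
  simpa [Finset.erase_insert h1, Finset.erase_insert h2] using this

lemma card_notmem {s : ℕ} {B : Finset ℕ} (hB : B ∈ niceSets s) :
    (insert (s + 1) B).card = B.card + 1 :=
  Finset.card_insert_of_notMem (notmem_succ hB)

lemma card_nice (s : ℕ) : (niceSets s).card = Nat.fib (s + 1) := by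
  induction s using Nat.strong_induction_on with
  | _ s ih =>
    match s with
    | 0 => decide
    | 1 => decide
    | (k + 2) =>
      rw [decomp, Finset.card_union_of_disjoint (disj k),
        Finset.card_image_of_injOn (injOn k), ih (k + 1) (by omega), ih k (by omega)]
      rw [show k + 2 + 1 = k + 1 + 2 from rfl, Nat.fib_add_two (n := k + 1),
        show k + 1 + 1 = k + 2 from rfl]
      omega

/-- For t ≥ 4, c_t = c_{t-1} + c_{t-2} + 2 b_{t-2} + F_{t-1}. -/
theorem c_recurrence (t : ℕ) (ht : 4 ≤ t) :
    c t = c (t - 1) + c (t - 2) + 2 * b (t - 2) + Nat.fib (t - 1) := by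
  obtain ⟨s, rfl⟩ : ∃ s, t = s + 2 := ⟨t - 2, by omega⟩
  simp only [show s + 2 - 1 = s + 1 from rfl, show s + 2 - 2 = s from rfl]
  rw [c, decomp, Finset.sum_union (disj s), Finset.sum_image (fun x hx y hy => injOn s hx hy)]
  have key : ∀ B ∈ niceSets s, (insert (s + 1) B).card ^ 2 = B.card ^ 2 + 2 * B.card + 1 := by
    intro B hB
    rw [card_notmem hB]; ring
  rw [Finset.sum_congr rfl key, Finset.sum_add_distrib, Finset.sum_add_distrib,
    Finset.sum_const, ← Finset.mul_sum, card_nice]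
  simp [c, b]
  ring
end

section
/- For t ≥ 2, the largest size of a partition with distinct parts that is simultaneously t-core and (t+1)-core equals floor((1/3)·C(t+1,2)) = floor(t(t+1)/6). -/
/-!
Let `a` be the largest part and `ℓ` the number of parts. Since the parts are distinct, the hook
lengths along the first row drop by at most 2 from one box to the next, going from `a + ℓ - 1`
down to `1`; so one of them equals `t` or `t + 1` unless `a + ℓ ≤ t`. Distinct parts below `a`
sum to at most `ℓa - ℓ(ℓ - 1)/2`, and maximising this subject to `a + ℓ ≤ t` gives
`⌊t(t + 1)/6⌋`. Conversely, the staircase of `ℓ = ⌊(t + 1)/3⌋` consecutive parts with largest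
part `t - ℓ` has all its hooks below `t` and attains the bound.
-/

/-- The hook length of the box in row i (0-indexed) and column j (1-indexed) of the Young
diagram of the partition (λ_1, ..., λ_ℓ): arm + leg + 1. -/
def hook (l : List ℕ) (i j : ℕ) : ℕ :=
  (l.getD i 0 - j) + ((l.drop (i + 1)).filter (fun p => decide (j ≤ p))).length + 1

/-- A partition is an s-core if none of its hook lengths equals s. -/
def IsCore (l : List ℕ) (s : ℕ) : Prop :=
  ∀ i j, i < l.length → 1 ≤ j → j ≤ l.getD i 0 → hook l i j ≠ s

lemma exists_eq_or_eq_succ_of_step_le_two {f : ℕ → ℕ} {t a b : ℕ} (hab : a ≤ b)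
    (hstep : ∀ j, a ≤ j → j < b → f j ≤ f (j + 1) + 2) (ha : t ≤ f a) (hb : f b ≤ t + 1) :
    ∃ j, a ≤ j ∧ j ≤ b ∧ (f j = t ∨ f j = t + 1) := by
  induction hd : b - a generalizing a with
  | zero =>
    obtain rfl : b = a := by omega
    exact ⟨b, le_rfl, le_rfl, by omega⟩
  | succ d ih =>
    by_cases hfa : f a ≤ t + 1
    · exact ⟨a, le_rfl, hab, by omega⟩
    have := hstep a le_rfl (by omega)
    obtain ⟨j, hj, hjb, hfj⟩ := ih (a := a + 1) (by omega)
      (fun j h1 h2 => hstep j (by omega) h2) (by omega) (by omega)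
    exact ⟨j, by omega, hjb, hfj⟩

lemma hook_cons_zero (a j : ℕ) (rest : List ℕ) :
    hook (a :: rest) 0 j = (a - j) + (rest.filter (fun p => decide (j ≤ p))).length + 1 := rfl

lemma hook_cons_zero_self {a : ℕ} {rest : List ℕ} (h : ∀ p ∈ rest, p < a) :
    hook (a :: rest) 0 a = 1 := by
  rw [hook_cons_zero, List.filter_eq_nil_iff.mpr fun p hp => by simpa using h p hp]
  simp

lemma hook_cons_zero_one {a : ℕ} {rest : List ℕ} (ha : 0 < a) (h : ∀ p ∈ rest, 0 < p) :
    hook (a :: rest) 0 1 = a + rest.length := by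
  rw [hook_cons_zero, List.filter_eq_self.mpr fun p hp => decide_eq_true (show 1 ≤ p from h p hp)]
  omega

lemma hook_cons_zero_le_succ_add_two {a j : ℕ} {rest : List ℕ} (hja : j < a)
    (hrest : rest.Nodup) : hook (a :: rest) 0 j ≤ hook (a :: rest) 0 (j + 1) + 2 := by
  have hsub : (rest.filter fun p => decide (j ≤ p)).Subperm
      (j :: rest.filter fun p => decide (j + 1 ≤ p)) :=
    (hrest.filter _).subperm fun p hp => by
      simp only [List.mem_filter, decide_eq_true_eq, List.mem_cons] at hp ⊢
      grind
  have := hsub.length_le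
  simp only [hook_cons_zero, List.length_cons] at this ⊢
  omega

lemma head_add_length_lt_of_isCore {a t : ℕ} {rest : List ℕ} (hl : (a :: rest).Pairwise (· > ·))
    (hpos : ∀ p ∈ a :: rest, 0 < p) (ht : IsCore (a :: rest) t)
    (ht1 : IsCore (a :: rest) (t + 1)) : a + rest.length < t := by
  obtain ⟨hlt, hrest⟩ := List.pairwise_cons.mp hl
  have ha : 0 < a := hpos a List.mem_cons_self
  by_contra! hle
  obtain ⟨j, hj1, hja, hj⟩ :=
    exists_eq_or_eq_succ_of_step_le_two (f := hook (a :: rest) 0) (t := t) ha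
      (fun j _ hj => hook_cons_zero_le_succ_add_two hj hrest.nodup)
      (by rwa [hook_cons_zero_one ha fun p hp => hpos p (List.mem_cons_of_mem a hp)])
      (by rw [hook_cons_zero_self hlt]; omega)
  rcases hj with hj | hj
  · exact ht 0 j (by simp) hj1 hja hj
  · exact ht1 0 j (by simp) hj1 hja hj

lemma two_mul_sum_add_le {l : List ℕ} {a : ℕ} (hl : l.Pairwise (· > ·)) (ha : ∀ p ∈ l, p < a) :
    2 * l.sum + l.length ^ 2 + l.length ≤ 2 * a * l.length := by
  induction l generalizing a with
  | nil => simp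
  | cons b rest ih =>
    obtain ⟨hb, hrest⟩ := List.pairwise_cons.mp hl
    have := ih hrest hb
    have hba := ha b List.mem_cons_self
    simp only [List.sum_cons, List.length_cons]
    nlinarith

lemma six_mul_sum_le_of_isCore {l : List ℕ} {t : ℕ} (hl : l.Pairwise (· > ·))
    (hpos : ∀ p ∈ l, 0 < p) (ht : IsCore l t) (ht1 : IsCore l (t + 1)) :
    6 * l.sum ≤ t * (t + 1) := by
  cases l with
  | nil => simp
  | cons a rest =>
    have hlen := head_add_length_lt_of_isCore hl hpos ht ht1
    have hsum := two_mul_sum_add_le (List.pairwise_cons.mp hl).2 (List.pairwise_cons.mp hl).1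
    -- with `m` parts, `6 * l.sum ≤ 3m(2t + 1 - 3m) = t(t + 1) - (t - 3m)(t - 3m + 1)`
    have hsq : (0 : ℤ) ≤ (t - 3 * (rest.length + 1)) * (t - 3 * (rest.length + 1) + 1) := by
      rcases le_or_gt 0 ((t : ℤ) - 3 * (rest.length + 1)) with h | h <;> nlinarith
    simp only [List.sum_cons]
    zify at *
    nlinarith

lemma isCore_of_forall_add_length_le {l : List ℕ} {s : ℕ} (h : ∀ p ∈ l, p + l.length ≤ s) :
    IsCore l s := by
  intro i j hi hj _
  have hmem := h _ (List.getD_eq_getElem l 0 hi ▸ List.getElem_mem hi)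
  have hleg := (List.length_filter_le (fun p => decide (j ≤ p)) (l.drop (i + 1))).trans_eq
    List.length_drop
  unfold hook
  omega

lemma isCore_range'_reverse {s ℓ u : ℕ} (h : s + 2 * ℓ ≤ u + 1) :
    IsCore (List.range' s ℓ).reverse u :=
  isCore_of_forall_add_length_le fun p hp => by
    simp only [List.mem_reverse, List.mem_range'_1, List.length_reverse,
      List.length_range'] at hp ⊢
    omega

lemma two_mul_sum_range'_add (s n : ℕ) : 2 * (List.range' s n).sum + n = n * (2 * s + n) := by
  induction n generalizing s with
  | zero => simp
  | succ n ih =>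
    rw [List.range'_succ, List.sum_cons]
    linarith [ih (s + 1)]

lemma exists_range'_sum_eq (t : ℕ) :
    ∃ s ℓ, 0 < s ∧ s + 2 * ℓ ≤ t + 1 ∧ (List.range' s ℓ).sum = t * (t + 1) / 6 := by
  obtain ⟨k, rfl | rfl | rfl⟩ : ∃ k, t = 3 * k ∨ t = 3 * k + 1 ∨ t = 3 * k + 2 :=
    ⟨t / 3, by omega⟩
  · have := two_mul_sum_range'_add (k + 1) k
    refine ⟨k + 1, k, by omega, by omega, ?_⟩
    have : 3 * k * (3 * k + 1) = 6 * (List.range' (k + 1) k).sum := by nlinarith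
    omega
  · have := two_mul_sum_range'_add (k + 2) k
    refine ⟨k + 2, k, by omega, by omega, ?_⟩
    have : (3 * k + 1) * (3 * k + 1 + 1) = 6 * (List.range' (k + 2) k).sum + 2 := by nlinarith
    omega
  · have := two_mul_sum_range'_add (k + 1) (k + 1)
    refine ⟨k + 1, k + 1, by omega, by omega, ?_⟩
    have : (3 * k + 2) * (3 * k + 2 + 1) = 6 * (List.range' (k + 1) (k + 1)).sum := by
      nlinarith
    omega

theorem largest_size_distinct_core_general (t : ℕ) :
    IsGreatest {n : ℕ | ∃ l : List ℕ, l.Pairwise (· > ·) ∧ (∀ p ∈ l, 0 < p) ∧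
      IsCore l t ∧ IsCore l (t + 1) ∧ l.sum = n} (t * (t + 1) / 6) := by
  refine ⟨?_, ?_⟩
  · obtain ⟨s, ℓ, hs, hst, hsum⟩ := exists_range'_sum_eq t
    refine ⟨(List.range' s ℓ).reverse, List.pairwise_reverse.mpr (List.pairwise_lt_range' 1),
      fun p hp => ?_, isCore_range'_reverse hst, isCore_range'_reverse (by omega), ?_⟩
    · rw [List.mem_reverse, List.mem_range'_1] at hp
      omega
    · rw [List.sum_reverse, hsum]
  · rintro n ⟨l, hl, hpos, ht, ht1, rfl⟩
    rw [Nat.le_div_iff_mul_le (by norm_num), mul_comm]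
    exact six_mul_sum_le_of_isCore hl hpos ht ht1

/-- The largest size of a (t, t+1)-core partition with distinct parts is ⌊t(t+1)/6⌋. -/
theorem largest_size_distinct_core (t : ℕ) (ht : 2 ≤ t) :
    IsGreatest {n : ℕ | ∃ l : List ℕ, l.Pairwise (· > ·) ∧ (∀ p ∈ l, 0 < p) ∧
      IsCore l t ∧ IsCore l (t + 1) ∧ l.sum = n} (t * (t + 1) / 6) :=
  largest_size_distinct_core_general t
end
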